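/- Let X be a compact metric space, let μ be a finite Borel measure on X, and let K ⊆ X be a compact subset. For a homeomorphism g : X → X set Λ_g(K) = ⋂_{n ∈ ℤ} gⁿ(K). If g is a homeomorphism of X and (g_j) is a sequence of homeomorphisms of X such that g_j → g uniformly and g_j⁻¹ → g⁻¹ uniformly, then limsup_{j→∞} μ(Λ_{g_j}(K)) ≤ μ(Λ_g(K)); equivalently, the function h ↦ μ(Λ_h(K)) is upper semicontinuous at g with respect to the topology of uniform convergence of h together with h⁻¹. -/
import Mathlib


open MeasureTheory Filter Topology

/-- The maximal invariant set of a homeomorphism `g` in a set `K`: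
`Λ_g(K) = ⋂_{n ∈ ℤ} gⁿ(K)`. -/
def maximalInvariantSet {X : Type*} [TopologicalSpace X] (g : X ≃ₜ X) (K : Set X) : Set X :=
  ⋂ n : ℤ, ⇑(g.toEquiv ^ n) '' K

/-- Composition of uniformly convergent sequences of maps on a compact metric space. -/
lemma tendstoUniformly_comp_aux {X : Type*} [MetricSpace X] [CompactSpace X]
    {f h : X → X} {fs hs : ℕ → X → X}
    (hf : TendstoUniformly fs f atTop) (hh : TendstoUniformly hs h atTop)
    (hc : Continuous h) :
    TendstoUniformly (fun j x => hs j (fs j x)) (fun x => h (f x)) atTop := by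
  rw [Metric.tendstoUniformly_iff] at *
  intro ε hε
  obtain ⟨δ, hδ, hδ'⟩ := Metric.uniformContinuous_iff.1
    (CompactSpace.uniformContinuous_of_continuous hc) (ε / 2) (half_pos hε)
  filter_upwards [hf δ hδ, hh (ε / 2) (half_pos hε)] with j h1 h2 x
  calc dist (h (f x)) (hs j (fs j x))
      ≤ dist (h (f x)) (h (fs j x)) + dist (h (fs j x)) (hs j (fs j x)) := dist_triangle _ _ _
    _ < ε / 2 + ε / 2 := by
        refine add_lt_add ?_ (h2 (fs j x))
        exact hδ' (by simpa [dist_comm] using h1 x)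
    _ = ε := add_halves ε

lemma continuous_equiv_pow {X : Type*} [TopologicalSpace X] (g : X ≃ₜ X) (m : ℕ) :
    Continuous ⇑(g.toEquiv ^ m) := by
  induction m with
  | zero => simpa using continuous_id
  | succ m ih =>
      have : ⇑(g.toEquiv ^ (m + 1)) = fun x => (g.toEquiv ^ m) (g x) := by
        ext x; rw [pow_succ]; rfl
      rw [this]
      exact ih.comp g.continuous

/-- Natural powers of uniformly convergent homeomorphisms converge uniformly. -/
lemma tendstoUniformly_pow_aux {X : Type*} [MetricSpace X] [CompactSpace X]
    (g : X ≃ₜ X) (gs : ℕ → X ≃ₜ X)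
    (hconv : TendstoUniformly (fun j => ⇑(gs j)) (⇑g) atTop) (m : ℕ) :
    TendstoUniformly (fun j => ⇑((gs j).toEquiv ^ m)) (⇑(g.toEquiv ^ m)) atTop := by
  induction m with
  | zero =>
      simp only [pow_zero]
      intro s hs
      exact Eventually.of_forall fun j x => refl_mem_uniformity hs
  | succ m ih =>
      have h1 : (fun j => ⇑((gs j).toEquiv ^ (m + 1)))
          = fun j x => ((gs j).toEquiv ^ m) ((gs j) x) := by
        funext j x; rw [pow_succ]; rfl
      have h2 : ⇑(g.toEquiv ^ (m + 1)) = fun x => (g.toEquiv ^ m) (g x) := by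
        funext x; rw [pow_succ]; rfl
      rw [h1, h2]
      exact tendstoUniformly_comp_aux hconv ih (continuous_equiv_pow g m)

lemma symm_pow_eq {X : Type*} [TopologicalSpace X] (g : X ≃ₜ X) (m : ℕ) :
    (g.symm).toEquiv ^ m = (g.toEquiv ^ m)⁻¹ := by
  have : (g.symm).toEquiv = (g.toEquiv)⁻¹ := rfl
  rw [this, inv_pow]

/-- Integer powers of uniformly convergent homeomorphisms converge uniformly. -/
lemma tendstoUniformly_zpow_aux {X : Type*} [MetricSpace X] [CompactSpace X]
    (g : X ≃ₜ X) (gs : ℕ → X ≃ₜ X)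
    (hconv : TendstoUniformly (fun j => ⇑(gs j)) (⇑g) atTop)
    (hconv' : TendstoUniformly (fun j => ⇑(gs j).symm) (⇑g.symm) atTop) (n : ℤ) :
    TendstoUniformly (fun j => ⇑((gs j).toEquiv ^ n)) (⇑(g.toEquiv ^ n)) atTop := by
  cases n with
  | ofNat m =>
      simpa [zpow_natCast] using tendstoUniformly_pow_aux g gs hconv m
  | negSucc m =>
      have h := tendstoUniformly_pow_aux g.symm (fun j => (gs j).symm) hconv' (m + 1)
      simp only [symm_pow_eq] at h
      simpa [zpow_negSucc] using h

lemma continuous_equiv_zpow {X : Type*} [TopologicalSpace X] (g : X ≃ₜ X) (n : ℤ) :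
    Continuous ⇑(g.toEquiv ^ n) := by
  cases n with
  | ofNat m => simpa [zpow_natCast] using continuous_equiv_pow g m
  | negSucc m =>
      rw [zpow_negSucc, ← symm_pow_eq]
      exact continuous_equiv_pow g.symm (m + 1)

/-- Upper semicontinuity of the measure of the maximal invariant set: if `g_j → g`
uniformly and `g_j⁻¹ → g⁻¹` uniformly, then `limsup_j μ(Λ_{g_j}(K)) ≤ μ(Λ_g(K))`. -/
theorem limsup_measure_maximalInvariantSet_le
    {X : Type*} [MetricSpace X] [CompactSpace X] [MeasurableSpace X] [BorelSpace X]
    (μ : Measure X) [IsFiniteMeasure μ]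
    (K : Set X) (hK : IsCompact K)
    (g : X ≃ₜ X) (gs : ℕ → X ≃ₜ X)
    (hconv : TendstoUniformly (fun j => ⇑(gs j)) (⇑g) atTop)
    (hconv' : TendstoUniformly (fun j => ⇑(gs j).symm) (⇑g.symm) atTop) :
    limsup (fun j => μ (maximalInvariantSet (gs j) K)) atTop
      ≤ μ (maximalInvariantSet g K) := by
  -- reduce to open supersets, by outer regularity
  rw [Set.measure_eq_iInf_isOpen]
  refine le_iInf fun U => le_iInf fun hU => le_iInf fun hUopen => ?_
  -- key claim: eventually Λ_{gs j}(K) ⊆ U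
  have key : ∀ᶠ j in atTop, maximalInvariantSet (gs j) K ⊆ U := by
    -- compact images
    have hcompact : ∀ n : ℤ, IsCompact (⇑(g.toEquiv ^ n) '' K) :=
      fun n => hK.image (continuous_equiv_zpow g n)
    -- finite subfamily
    obtain ⟨u, hu⟩ : ∃ u : Finset ℤ,
        K ∩ ⋂ n ∈ u, (⇑(g.toEquiv ^ n) '' K ∩ Uᶜ) = ∅ := by
      apply hK.elim_finite_subfamily_closed
        (fun n : ℤ => ⇑(g.toEquiv ^ n) '' K ∩ Uᶜ)
        (fun n => ((hcompact n).isClosed).inter hUopen.isClosed_compl)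
      rw [Set.eq_empty_iff_forall_notMem]
      rintro x ⟨hxK, hx⟩
      simp only [Set.mem_iInter, Set.mem_inter_iff, Set.mem_compl_iff] at hx
      exact (hx 0).2 (hU (Set.mem_iInter.2 fun n => ((hx n).1)))
    by_contra hcon
    rw [Filter.not_eventually] at hcon
    -- extract a subsequence with points outside U
    obtain ⟨φ, hφ, hφ'⟩ := Filter.extraction_of_frequently_atTop
      (hcon.mono fun j hj => by
        rw [Set.not_subset] at hj; exact hj)
    choose x hxΛ hxU using hφ'
    have hxK : ∀ j, x j ∈ K := by
      intro j
      have := Set.mem_iInter.1 (hxΛ j) 0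
      simpa using this
    obtain ⟨z, hzK, ψ, hψ, hz⟩ := hK.tendsto_subseq hxK
    -- z belongs to gⁿ(K) for each n ∈ u
    have hz_mem : ∀ n ∈ u, z ∈ ⇑(g.toEquiv ^ n) '' K := by
      intro n _
      rw [Equiv.image_eq_preimage_symm, Set.mem_preimage]
      have hmem : ∀ j, ((gs (φ (ψ j))).toEquiv ^ n).symm (x (ψ j)) ∈ K := by
        intro j
        have := Set.mem_iInter.1 (hxΛ (ψ j)) n
        rw [Equiv.image_eq_preimage_symm, Set.mem_preimage] at this
        exact this
      have hsymm : ∀ h : X ≃ₜ X, (⇑((h.toEquiv ^ n)).symm) = ⇑(h.toEquiv ^ (-n)) := by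
        intro h; funext y
        rw [zpow_neg]; rfl
      -- uniform convergence of the (-n)-th powers along the subsequence
      have htu : TendstoUniformly (fun j => ⇑((gs (φ (ψ j))).toEquiv ^ (-n)))
          (⇑(g.toEquiv ^ (-n))) atTop := by
        intro s hs
        exact ((hφ.comp hψ).tendsto_atTop).eventually
          (tendstoUniformly_zpow_aux g gs hconv hconv' (-n) s hs)
      have hlim : Tendsto (fun j => ((gs (φ (ψ j))).toEquiv ^ (-n)) (x (ψ j))) atTop
          (𝓝 ((g.toEquiv ^ (-n)) z)) :=
        htu.tendsto_comp (continuous_equiv_zpow g (-n)).continuousAt hz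
      have : (g.toEquiv ^ (-n)) z ∈ K := by
        refine hK.isClosed.mem_of_tendsto hlim (Eventually.of_forall fun j => ?_)
        have := hmem j
        rwa [show (⇑((gs (φ (ψ j))).toEquiv ^ n).symm) = ⇑((gs (φ (ψ j))).toEquiv ^ (-n))
          from hsymm _] at this
      rwa [show (⇑(g.toEquiv ^ n).symm) = ⇑(g.toEquiv ^ (-n)) from hsymm _]
    -- hence z ∈ U, contradicting x_j ∉ U
    have hzU : z ∈ U := by
      by_contra hzU
      have : z ∈ K ∩ ⋂ n ∈ u, (⇑(g.toEquiv ^ n) '' K ∩ Uᶜ) :=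
        ⟨hzK, Set.mem_iInter₂.2 fun n hn => ⟨hz_mem n hn, hzU⟩⟩
      rw [hu] at this
      exact this
    have : ∀ᶠ j in atTop, x (ψ j) ∈ U :=
      hz.eventually (hUopen.mem_nhds hzU)
    obtain ⟨j, hj⟩ := this.exists
    exact hxU (ψ j) hj
  refine limsup_le_of_le (by isBoundedDefault) ?_
  filter_upwards [key] with j hj
  exact measure_mono hj
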